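/- arXiv:2502.09321 — 2 statements merged into one kernel-verified Lean document; each statement's English description precedes it below -/
import Mathlib

section
/- Let γ > 1, p(v) = v^{-γ}, μ̃ > 0, and fix v₊ > 0. There exist constants δ₀ > 0, C > 0 and c > 0, depending only on γ, μ̃ and v₊, such that for every v_m with 0 < v₊ − v_m ≤ δ₀ the following holds. Let σ* := √( (p(v_m) − p(v₊)) / (v₊ − v_m) ), let δ_S := p(v_m) − p(v₊), and let V : ℝ → (v_m, v₊) be the strictly increasing solution of μ̃ σ* V' = − σ*² (V − v_m) − ( p(V) − p(v_m) ) with V(−∞) = v_m, V(+∞) = v₊, normalized by V(0) = (v_m + v₊)/2. Then for all ξ ∈ ℝ: |V(ξ) − v_m| ≤ C δ_S e^{−c δ_S |ξ|} if ξ ≤ 0; |V(ξ) − v₊| ≤ C δ_S e^{−c δ_S |ξ|} if ξ ≥ 0; |V'(ξ)| ≤ C δ_S² e^{−c δ_S |ξ|}; |V''(ξ)| ≤ C δ_S |V'(ξ)|; and |V'''(ξ)| ≤ C δ_S² |V'(ξ)|. -/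
open Set Real

lemma aux_concave_nonneg {a b : ℝ} {f : ℝ → ℝ} (hab : a < b)
    (hf : ConcaveOn ℝ (Set.Icc a b) f) (ha0 : f a = 0) (hb0 : f b = 0)
    {x : ℝ} (hx : x ∈ Set.Icc a b) : 0 ≤ f x := by
  obtain ⟨hx1, hx2⟩ := hx
  have hba : (0:ℝ) < b - a := by linarith
  have ht : 0 ≤ (b - x)/(b - a) := by apply div_nonneg <;> linarith
  have hs : 0 ≤ (x - a)/(b - a) := by apply div_nonneg <;> linarith
  have hsum : (b - x)/(b - a) + (x - a)/(b - a) = 1 := by field_simp; ring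
  have key := hf.2 (Set.left_mem_Icc.2 hab.le) (Set.right_mem_Icc.2 hab.le) ht hs hsum
  simp only [smul_eq_mul, ha0, hb0, mul_zero, add_zero] at key
  have hpt : (b - x)/(b - a) * a + (x - a)/(b - a) * b = x := by
    field_simp; ring
  rwa [hpt] at key

lemma aux_concaveOn {a b : ℝ} {f f' f'' : ℝ → ℝ} (ha : 0 < a)
    (hf : ∀ x, 0 < x → HasDerivAt f (f' x) x)
    (hf' : ∀ x, 0 < x → HasDerivAt f' (f'' x) x)
    (hneg : ∀ x ∈ Set.Ioo a b, f'' x ≤ 0) : ConcaveOn ℝ (Set.Icc a b) f := by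
  have hint : interior (Set.Icc a b) = Set.Ioo a b := interior_Icc
  apply concaveOn_of_hasDerivWithinAt2_nonpos (convex_Icc a b) (f' := f') (f'' := f'')
  · intro x hx
    exact ((hf x (lt_of_lt_of_le ha hx.1)).differentiableAt.continuousAt).continuousWithinAt
  · intro x hx
    rw [hint] at hx
    exact ((hf x (lt_trans ha hx.1)).hasDerivWithinAt)
  · intro x hx
    rw [hint] at hx
    exact ((hf' x (lt_trans ha hx.1)).hasDerivWithinAt)
  · intro x hx
    rw [hint] at hx
    exact hneg x hx

set_option maxHeartbeats 2000000 in
/-- Decay properties of the 2-viscous-shock profile for small shock strength: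
with `p(v) = v^(-γ)`, `σ* = √((p(v_m) - p(v₊))/(v₊ - v_m))`,
`δ_S = p(v_m) - p(v₊)`, and `V` the strictly increasing solution of
`μ̃ σ* V' = -σ*²(V - v_m) - (p(V) - p(v_m))` connecting `v_m` to `v₊` and
normalized by `V(0) = (v_m + v₊)/2`, there are `δ₀, C, c > 0` depending only on
`γ, μ̃, v₊` such that whenever `0 < v₊ - v_m ≤ δ₀`:
`|V(ξ) - v_m| ≤ C δ_S e^(-c δ_S |ξ|)` for `ξ ≤ 0`,
`|V(ξ) - v₊| ≤ C δ_S e^(-c δ_S |ξ|)` for `ξ ≥ 0`,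
`|V'| ≤ C δ_S² e^(-c δ_S |ξ|)`, `|V''| ≤ C δ_S |V'|`, `|V'''| ≤ C δ_S² |V'|`. -/
theorem stmt_16 (γ mu vp : ℝ) (hγ : 1 < γ) (hmu : 0 < mu) (hvp : 0 < vp) :
    ∃ δ₀ > (0 : ℝ), ∃ C > (0 : ℝ), ∃ c > (0 : ℝ),
      ∀ vm : ℝ, vm < vp → vp - vm ≤ δ₀ →
        ∀ V : ℝ → ℝ, StrictMono V → ContDiff ℝ 1 V →
          (∀ ξ : ℝ, vm < V ξ ∧ V ξ < vp) →
          (∀ ξ : ℝ,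
            mu * Real.sqrt ((vm ^ (-γ) - vp ^ (-γ)) / (vp - vm)) * deriv V ξ
              = -(Real.sqrt ((vm ^ (-γ) - vp ^ (-γ)) / (vp - vm))) ^ 2 * (V ξ - vm)
                - ((V ξ) ^ (-γ) - vm ^ (-γ))) →
          Filter.Tendsto V Filter.atBot (nhds vm) →
          Filter.Tendsto V Filter.atTop (nhds vp) →
          V 0 = (vm + vp) / 2 →
          ∀ ξ : ℝ,
            (ξ ≤ 0 →
              |V ξ - vm| ≤ C * (vm ^ (-γ) - vp ^ (-γ))
                * Real.exp (-(c * (vm ^ (-γ) - vp ^ (-γ)) * |ξ|))) ∧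
            (0 ≤ ξ →
              |V ξ - vp| ≤ C * (vm ^ (-γ) - vp ^ (-γ))
                * Real.exp (-(c * (vm ^ (-γ) - vp ^ (-γ)) * |ξ|))) ∧
            |deriv V ξ| ≤ C * (vm ^ (-γ) - vp ^ (-γ)) ^ 2
                * Real.exp (-(c * (vm ^ (-γ) - vp ^ (-γ)) * |ξ|)) ∧
            |iteratedDeriv 2 V ξ| ≤ C * (vm ^ (-γ) - vp ^ (-γ)) * |deriv V ξ| ∧
            |iteratedDeriv 3 V ξ| ≤ C * (vm ^ (-γ) - vp ^ (-γ)) ^ 2 * |deriv V ξ| := by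
  have hγ0 : (0:ℝ) < γ := by linarith
  have hvp2 : (0:ℝ) < vp/2 := by linarith
  set a : ℝ := γ * vp ^ (-γ-1) with ha_def
  set A : ℝ := γ * (vp/2) ^ (-γ-1) with hA_def
  set b : ℝ := γ*(γ+1) * vp ^ (-γ-2) with hb_def
  set B : ℝ := γ*(γ+1) * (vp/2) ^ (-γ-2) with hB_def
  have ha : 0 < a := mul_pos hγ0 (Real.rpow_pos_of_pos hvp _)
  have hA : 0 < A := mul_pos hγ0 (Real.rpow_pos_of_pos hvp2 _)
  have hb : 0 < b := mul_pos (by nlinarith) (Real.rpow_pos_of_pos hvp _)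
  have hB : 0 < B := mul_pos (by nlinarith) (Real.rpow_pos_of_pos hvp2 _)
  have hsa : 0 < Real.sqrt a := Real.sqrt_pos.2 ha
  have hsA : 0 < Real.sqrt A := Real.sqrt_pos.2 hA
  set c : ℝ := b/(4*mu*A*Real.sqrt A) with hc_def
  have hc : 0 < c := by positivity
  set C1 : ℝ := 1/(2*a) with hC1_def
  set C2 : ℝ := B/(4*mu*Real.sqrt a*a^2) with hC2_def
  set C3 : ℝ := B/(a*mu*Real.sqrt a) with hC3_def
  set C5 : ℝ := 3*B^2/(2*mu^2*a^3) with hC5_def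
  set C : ℝ := C1 + C2 + C3 + C5 with hC_def
  have hC1 : 0 < C1 := by positivity
  have hC2 : 0 < C2 := by positivity
  have hC3 : 0 < C3 := by positivity
  have hC5 : 0 < C5 := by positivity
  have hC : 0 < C := by positivity
  have hC1C : C1 ≤ C := by rw [hC_def]; linarith
  have hC2C : C2 ≤ C := by rw [hC_def]; linarith
  have hC3C : C3 ≤ C := by rw [hC_def]; linarith
  have hC5C : C5 ≤ C := by rw [hC_def]; linarith
  clear_value a A b B c C1 C2 C3 C5 C
  refine ⟨vp/2, hvp2, C, hC, c, hc, ?_⟩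
  intro vm hvm hδ₀ V hVmono hVC1 hVrange hODE _ _ hV0
  have hvm2 : vp/2 ≤ vm := by linarith
  have hvm0 : 0 < vm := by linarith
  set δ : ℝ := vp - vm with hδ_def
  have hδ : 0 < δ := by simp only [hδ_def]; linarith
  set s : ℝ := vm ^ (-γ) - vp ^ (-γ) with hs_def
  have hs : 0 < s := by
    have h2 := Real.rpow_lt_rpow_of_neg hvm0 hvm (by linarith : -γ < 0)
    simp only [hs_def]; linarith
  clear_value δ s
  set σ : ℝ := Real.sqrt (s/δ) with hσ_def
  clear_value σ
  -- derivatives of rpow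
  have hderp : ∀ x : ℝ, 0 < x → HasDerivAt (fun v : ℝ => v ^ (-γ)) (-γ * x ^ (-γ-1)) x :=
    fun x hx => Real.hasDerivAt_rpow_const (Or.inl hx.ne')
  have hderp1 : ∀ x : ℝ, 0 < x →
      HasDerivAt (fun v : ℝ => γ * v ^ (-γ-1)) (-(γ*(γ+1)) * x ^ (-γ-2)) x := by
    intro x hx
    have h := (Real.hasDerivAt_rpow_const (x := x) (p := -γ-1) (Or.inl hx.ne')).const_mul γ
    refine h.congr_deriv ?_
    rw [show (-γ-1-1 : ℝ) = -γ-2 by ring]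
    ring
  -- monotonicity helpers
  have hmono1 : ∀ x y : ℝ, 0 < x → x ≤ y → γ * y ^ (-γ-1) ≤ γ * x ^ (-γ-1) := by
    intro x y hx hxy
    have := Real.rpow_le_rpow_of_nonpos hx hxy (by linarith : -γ-1 ≤ 0)
    exact mul_le_mul_of_nonneg_left this hγ0.le
  have hmono2 : ∀ x y : ℝ, 0 < x → x ≤ y →
      γ*(γ+1) * y ^ (-γ-2) ≤ γ*(γ+1) * x ^ (-γ-2) := by
    intro x y hx hxy
    have := Real.rpow_le_rpow_of_nonpos hx hxy (by linarith : -γ-2 ≤ 0)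
    exact mul_le_mul_of_nonneg_left this (mul_nonneg hγ0.le (by linarith))
  have hφ : ∀ x : ℝ, vp/2 ≤ x → x ≤ vp → a ≤ γ * x ^ (-γ-1) ∧ γ * x ^ (-γ-1) ≤ A := by
    intro x h1 h2
    constructor
    · rw [ha_def]; exact hmono1 x vp (lt_of_lt_of_le hvp2 h1) h2
    · rw [hA_def]; exact hmono1 (vp/2) x hvp2 h1
  have hψ : ∀ x : ℝ, vp/2 ≤ x → x ≤ vp →
      b ≤ γ*(γ+1) * x ^ (-γ-2) ∧ γ*(γ+1) * x ^ (-γ-2) ≤ B := by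
    intro x h1 h2
    constructor
    · rw [hb_def]; exact hmono2 x vp (lt_of_lt_of_le hvp2 h1) h2
    · rw [hB_def]; exact hmono2 (vp/2) x hvp2 h1
  -- mean value theorem: s/δ = γ ζ^(-γ-1)
  obtain ⟨ζ, hζmem, hζ⟩ := exists_hasDerivAt_eq_slope (fun v : ℝ => v ^ (-γ))
    (fun x => -γ * x ^ (-γ-1)) hvm
    (fun x hx => (hderp x (lt_of_lt_of_le hvm0 hx.1)).continuousAt.continuousWithinAt)
    (fun x hx => hderp x (lt_trans hvm0 hx.1))
  have hζ1 : vp/2 ≤ ζ := le_trans hvm2 hζmem.1.le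
  have hζ2 : ζ ≤ vp := hζmem.2.le
  have hsδζ : s/δ = γ * ζ ^ (-γ-1) := by
    have h2 : -γ * ζ ^ (-γ-1) = -(s/δ) := by
      rw [hζ, hs_def, hδ_def]
      ring
    linarith
  have haA1 : a ≤ s/δ := hsδζ ▸ (hφ ζ hζ1 hζ2).1
  have haA2 : s/δ ≤ A := hsδζ ▸ (hφ ζ hζ1 hζ2).2
  have haδ : a*δ ≤ s := by
    have := (le_div_iff₀ hδ).1 haA1; linarith
  have hAδ : s ≤ A*δ := by
    have := (div_le_iff₀ hδ).1 haA2; linarith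
  have hδs : δ ≤ s/a := (le_div_iff₀ ha).2 (by linarith [haδ])
  -- σ facts
  have hσ2 : σ^2 = s/δ := by rw [hσ_def]; exact Real.sq_sqrt (by positivity)
  have hσa : Real.sqrt a ≤ σ := by rw [hσ_def]; exact Real.sqrt_le_sqrt haA1
  have hσA : σ ≤ Real.sqrt A := by rw [hσ_def]; exact Real.sqrt_le_sqrt haA2
  have hσpos : 0 < σ := lt_of_lt_of_le hsa hσa
  have hmuσ : 0 < mu*σ := mul_pos hmu hσpos
  -- oscillation of φ: for v ∈ [vm, vp], |γ v^(-γ-1) - s/δ| ≤ B*δ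
  obtain ⟨η, hηmem, hη⟩ := exists_hasDerivAt_eq_slope (fun v : ℝ => γ * v ^ (-γ-1))
    (fun x => -(γ*(γ+1)) * x ^ (-γ-2)) hvm
    (fun x hx => (hderp1 x (lt_of_lt_of_le hvm0 hx.1)).continuousAt.continuousWithinAt)
    (fun x hx => hderp1 x (lt_trans hvm0 hx.1))
  have hoscBδ : γ * vm ^ (-γ-1) - γ * vp ^ (-γ-1) ≤ B*δ := by
    have hη2 : γ*(γ+1) * η ^ (-γ-2) ≤ B :=
      (hψ η (le_trans hvm2 hηmem.1.le) hηmem.2.le).2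
    have h3 : γ * vm ^ (-γ-1) - γ * vp ^ (-γ-1) = (γ*(γ+1) * η ^ (-γ-2)) * δ := by
      have h4 := hη
      rw [← hδ_def, eq_div_iff hδ.ne'] at h4
      linarith
    rw [h3]
    exact mul_le_mul_of_nonneg_right hη2 hδ.le
  have hosc : ∀ v, vm ≤ v → v ≤ vp → |γ * v ^ (-γ-1) - s/δ| ≤ B*δ := by
    intro v h1 h2
    have hv0 : 0 < v := lt_of_lt_of_le hvm0 h1
    have e1 : γ * v ^ (-γ-1) ≤ γ * vm ^ (-γ-1) := hmono1 vm v hvm0 h1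
    have e2 : γ * vp ^ (-γ-1) ≤ γ * v ^ (-γ-1) := hmono1 v vp hv0 h2
    have e3 : γ * ζ ^ (-γ-1) ≤ γ * vm ^ (-γ-1) := hmono1 vm ζ hvm0 hζmem.1.le
    have e4 : γ * vp ^ (-γ-1) ≤ γ * ζ ^ (-γ-1) := hmono1 ζ vp (lt_trans hvm0 hζmem.1) hζmem.2.le
    rw [hsδζ, abs_le]
    constructor <;> linarith
  -- the nonlinearity h and its derivatives
  set h : ℝ → ℝ := fun v => -(s/δ)*(v - vm) - (v ^ (-γ) - vm ^ (-γ)) with hh_def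
  set h1 : ℝ → ℝ := fun v => -(s/δ) + γ * v ^ (-γ-1) with hh1_def
  set h2 : ℝ → ℝ := fun v => -(γ*(γ+1)) * v ^ (-γ-2) with hh2_def
  clear_value h h1 h2
  have hhd : ∀ x : ℝ, 0 < x → HasDerivAt h (h1 x) x := by
    intro x hx
    rw [hh_def, hh1_def]
    have e1 := ((hasDerivAt_id x).sub_const vm).const_mul (-(s/δ))
    have e2 := (hderp x hx).sub_const (vm ^ (-γ))
    have := e1.sub e2
    refine this.congr_deriv ?_
    ring
  have hh1d : ∀ x : ℝ, 0 < x → HasDerivAt h1 (h2 x) x := by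
    intro x hx
    rw [hh1_def, hh2_def]
    exact (hderp1 x hx).const_add (-(s/δ))
  have hhvm : h vm = 0 := by rw [hh_def]; simp
  have hhvp : h vp = 0 := by
    rw [hh_def]
    simp only
    have e1 : s/δ*(vp - vm) = s := by
      rw [← hδ_def]
      field_simp
    have e2 : vp ^ (-γ) - vm ^ (-γ) = -s := by rw [hs_def]; ring
    rw [e2]; linarith [e1]
  -- quadratic bounds for h on [vm, vp]
  have hquadlow : ∀ v, vm ≤ v → v ≤ vp → (b/2)*(v-vm)*(vp-v) ≤ h v := by
    intro v h1v h2v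
    have hq : ∀ x : ℝ, HasDerivAt (fun v => (b/2)*(v-vm)*(vp-v))
        ((b/2)*((vp-x) - (x-vm))) x := by
      intro x
      have e1 := ((hasDerivAt_id x).sub_const vm).const_mul (b/2)
      have e2 := (hasDerivAt_id x).const_sub vp
      have := (e1.mul e2)
      refine this.congr_deriv ?_
      simp only [id_eq]
      ring
    have hcc : ConcaveOn ℝ (Set.Icc vm vp) (fun v => h v - (b/2)*(v-vm)*(vp-v)) := by
      apply aux_concaveOn hvm0 (f' := fun x => h1 x - (b/2)*((vp-x) - (x-vm)))
        (f'' := fun x => h2 x + b)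
      · intro x hx
        exact (hhd x hx).sub (hq x)
      · intro x hx
        have e1 : HasDerivAt (fun x : ℝ => (b/2)*((vp-x) - (x-vm))) (-b) x := by
          have := (((hasDerivAt_id x).const_sub vp).sub ((hasDerivAt_id x).sub_const vm)).const_mul (b/2)
          refine this.congr_deriv ?_
          ring
        have := (hh1d x hx).sub e1
        refine this.congr_deriv ?_
        ring
      · intro x hx
        have := (hψ x (le_trans hvm2 hx.1.le) hx.2.le).1
        rw [hh2_def]
        simp only
        linarith
    have := aux_concave_nonneg hvm hcc (by simp [hhvm]) (by simp [hhvp]) ⟨h1v, h2v⟩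
    linarith [this]
  have hquadhigh : ∀ v, vm ≤ v → v ≤ vp → h v ≤ (B/2)*(v-vm)*(vp-v) := by
    intro v h1v h2v
    have hq : ∀ x : ℝ, HasDerivAt (fun v => (B/2)*(v-vm)*(vp-v))
        ((B/2)*((vp-x) - (x-vm))) x := by
      intro x
      have e1 := ((hasDerivAt_id x).sub_const vm).const_mul (B/2)
      have e2 := (hasDerivAt_id x).const_sub vp
      have := (e1.mul e2)
      refine this.congr_deriv ?_
      simp only [id_eq]
      ring
    have hcc : ConcaveOn ℝ (Set.Icc vm vp) (fun v => (B/2)*(v-vm)*(vp-v) - h v) := by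
      apply aux_concaveOn hvm0 (f' := fun x => (B/2)*((vp-x) - (x-vm)) - h1 x)
        (f'' := fun x => -B - h2 x)
      · intro x hx
        exact (hq x).sub (hhd x hx)
      · intro x hx
        have e1 : HasDerivAt (fun x : ℝ => (B/2)*((vp-x) - (x-vm))) (-B) x := by
          have := (((hasDerivAt_id x).const_sub vp).sub ((hasDerivAt_id x).sub_const vm)).const_mul (B/2)
          refine this.congr_deriv ?_
          ring
        have := e1.sub (hh1d x hx)
        exact this
      · intro x hx
        have := (hψ x (le_trans hvm2 hx.1.le) hx.2.le).2
        rw [hh2_def]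
        simp only
        linarith
    have := aux_concave_nonneg hvm hcc (by simp [hhvm]) (by simp [hhvp]) ⟨h1v, h2v⟩
    linarith [this]
  -- the ODE in explicit form
  have hV'd : ∀ ξ : ℝ, HasDerivAt V (deriv V ξ) ξ :=
    fun ξ => ((hVC1.differentiable one_ne_zero) ξ).hasDerivAt
  have hVl : ∀ ξ, vm < V ξ := fun ξ => (hVrange ξ).1
  have hVu : ∀ ξ, V ξ < vp := fun ξ => (hVrange ξ).2
  have hVpos : ∀ ξ, 0 < V ξ := fun ξ => lt_trans hvm0 (hVl ξ)
  have hODE' : ∀ ξ : ℝ, deriv V ξ = h (V ξ) / (mu*σ) := by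
    intro ξ
    have e := hODE ξ
    rw [hσ2] at e
    rw [eq_div_iff hmuσ.ne', hh_def]
    simp only
    linarith [e]
  have hdnn : ∀ ξ, 0 ≤ deriv V ξ := by
    intro ξ
    rw [hODE' ξ]
    apply div_nonneg _ hmuσ.le
    refine le_trans ?_ (hquadlow (V ξ) (hVl ξ).le (hVu ξ).le)
    have g1 := hVl ξ; have g2 := hVu ξ
    have : (0:ℝ) ≤ b/2 := by linarith
    exact mul_nonneg (mul_nonneg this (by linarith)) (by linarith)
  -- midpoint bounds
  have hmidL : ∀ ξ : ℝ, ξ ≤ 0 → δ/2 ≤ vp - V ξ := by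
    intro ξ hξ
    have := hVmono.monotone hξ
    rw [hV0] at this
    have h5 : δ = vp - vm := hδ_def
    linarith
  have hmidR : ∀ ξ : ℝ, 0 ≤ ξ → δ/2 ≤ V ξ - vm := by
    intro ξ hξ
    have := hVmono.monotone hξ
    rw [hV0] at this
    have h5 : δ = vp - vm := hδ_def
    linarith
  -- the key constant comparison
  have hstep : c*s*(mu*Real.sqrt A) ≤ b*δ/4 := by
    have e1 : c*s*(mu*Real.sqrt A) ≤ c*(A*δ)*(mu*Real.sqrt A) := by
      have := mul_le_mul_of_nonneg_left hAδ hc.le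
      exact mul_le_mul_of_nonneg_right this (by positivity)
    have e2 : c*(A*δ)*(mu*Real.sqrt A) = b*δ/4 := by
      rw [hc_def]
      field_simp
    linarith
  -- lower bounds for the derivative on each side
  have hlow : ∀ ξ : ℝ, ξ ≤ 0 → c*s*(V ξ - vm) ≤ deriv V ξ := by
    intro ξ hξ
    rw [hODE' ξ, le_div_iff₀ hmuσ]
    have hq := hquadlow (V ξ) (hVl ξ).le (hVu ξ).le
    have hhalf := hmidL ξ hξ
    have hVnn : (0:ℝ) ≤ V ξ - vm := by linarith [hVl ξ]
    have e1 : c*s*(V ξ - vm)*(mu*σ) ≤ c*s*(V ξ - vm)*(mu*Real.sqrt A) := by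
      have h6 : mu*σ ≤ mu*Real.sqrt A := mul_le_mul_of_nonneg_left hσA hmu.le
      exact mul_le_mul_of_nonneg_left h6 (mul_nonneg (mul_nonneg hc.le hs.le) hVnn)
    have e2 : c*s*(V ξ - vm)*(mu*Real.sqrt A) ≤ (b*δ/4)*(V ξ - vm) := by
      have h7 := mul_le_mul_of_nonneg_right hstep hVnn
      calc c*s*(V ξ - vm)*(mu*Real.sqrt A) = c*s*(mu*Real.sqrt A)*(V ξ - vm) := by ring
        _ ≤ (b*δ/4)*(V ξ - vm) := h7
    have e3 : (b*δ/4)*(V ξ - vm) ≤ b/2*(V ξ - vm)*(vp - V ξ) := by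
      have h8 : (b/2*(V ξ - vm))*(δ/2) ≤ (b/2*(V ξ - vm))*(vp - V ξ) :=
        mul_le_mul_of_nonneg_left hhalf (mul_nonneg (by linarith only [hb] : (0:ℝ) ≤ b/2) hVnn)
      calc (b*δ/4)*(V ξ - vm) = (b/2*(V ξ - vm))*(δ/2) := by ring
        _ ≤ (b/2*(V ξ - vm))*(vp - V ξ) := h8
        _ = b/2*(V ξ - vm)*(vp - V ξ) := by ring
    linarith only [e1, e2, e3, hq]
  have hhigh : ∀ ξ : ℝ, 0 ≤ ξ → c*s*(vp - V ξ) ≤ deriv V ξ := by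
    intro ξ hξ
    rw [hODE' ξ, le_div_iff₀ hmuσ]
    have hq := hquadlow (V ξ) (hVl ξ).le (hVu ξ).le
    have hhalf := hmidR ξ hξ
    have hVnn : (0:ℝ) ≤ vp - V ξ := by linarith [hVu ξ]
    have e1 : c*s*(vp - V ξ)*(mu*σ) ≤ c*s*(vp - V ξ)*(mu*Real.sqrt A) := by
      have h6 : mu*σ ≤ mu*Real.sqrt A := mul_le_mul_of_nonneg_left hσA hmu.le
      exact mul_le_mul_of_nonneg_left h6 (mul_nonneg (mul_nonneg hc.le hs.le) hVnn)
    have e2 : c*s*(vp - V ξ)*(mu*Real.sqrt A) ≤ (b*δ/4)*(vp - V ξ) := by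
      have h7 := mul_le_mul_of_nonneg_right hstep hVnn
      calc c*s*(vp - V ξ)*(mu*Real.sqrt A) = c*s*(mu*Real.sqrt A)*(vp - V ξ) := by ring
        _ ≤ (b*δ/4)*(vp - V ξ) := h7
    have e3 : (b*δ/4)*(vp - V ξ) ≤ b/2*(V ξ - vm)*(vp - V ξ) := by
      have h8 : (b/2*(vp - V ξ))*(δ/2) ≤ (b/2*(vp - V ξ))*(V ξ - vm) :=
        mul_le_mul_of_nonneg_left hhalf (mul_nonneg (by linarith only [hb] : (0:ℝ) ≤ b/2) hVnn)
      calc (b*δ/4)*(vp - V ξ) = (b/2*(vp - V ξ))*(δ/2) := by ring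
        _ ≤ (b/2*(vp - V ξ))*(V ξ - vm) := h8
        _ = b/2*(V ξ - vm)*(vp - V ξ) := by ring
    linarith only [e1, e2, e3, hq]
  -- Gronwall-type estimates
  set k : ℝ := c*s with hk_def
  have hk : 0 < k := by rw [hk_def]; exact mul_pos hc hs
  clear_value k
  have hexp1 : ∀ x : ℝ, HasDerivAt (fun t : ℝ => Real.exp (-k*t)) (-k*Real.exp (-k*x)) x := by
    intro x
    have h3 := ((hasDerivAt_id x).const_mul (-k)).exp
    refine h3.congr_deriv ?_
    simp only [id_eq]
    ring
  have hexp2 : ∀ x : ℝ, HasDerivAt (fun t : ℝ => Real.exp (k*t)) (k*Real.exp (k*x)) x := by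
    intro x
    have h3 := ((hasDerivAt_id x).const_mul k).exp
    refine h3.congr_deriv ?_
    simp only [id_eq]
    ring
  have hu' : ∀ x : ℝ, HasDerivAt (fun t => (V t - vm) * Real.exp (-k*t))
      ((deriv V x - k*(V x - vm)) * Real.exp (-k*x)) x := by
    intro x
    have e1 := ((hV'd x).sub_const vm).mul (hexp1 x)
    refine e1.congr_deriv ?_
    ring
  have hw' : ∀ x : ℝ, HasDerivAt (fun t => (vp - V t) * Real.exp (k*t))
      ((k*(vp - V x) - deriv V x) * Real.exp (k*x)) x := by
    intro x
    have e1 := ((hV'd x).const_sub vp).mul (hexp2 x)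
    refine e1.congr_deriv ?_
    ring
  have humono : MonotoneOn (fun t => (V t - vm) * Real.exp (-k*t)) (Set.Iic 0) := by
    apply monotoneOn_of_deriv_nonneg (convex_Iic 0)
    · exact ((hVC1.continuous.sub continuous_const).mul
        (Real.continuous_exp.comp (continuous_const.mul continuous_id))).continuousOn
    · intro x _
      exact (hu' x).differentiableAt.differentiableWithinAt
    · intro x hx
      rw [interior_Iic] at hx
      rw [(hu' x).deriv]
      have h4 := hlow x (le_of_lt hx)
      have h5 : 0 ≤ deriv V x - k*(V x - vm) := by
        rw [hk_def]; linarith only [h4, hk_def ▸ h4]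
      exact mul_nonneg h5 (Real.exp_nonneg _)
  have hwanti : AntitoneOn (fun t => (vp - V t) * Real.exp (k*t)) (Set.Ici 0) := by
    apply antitoneOn_of_deriv_nonpos (convex_Ici 0)
    · exact ((continuous_const.sub hVC1.continuous).mul
        (Real.continuous_exp.comp (continuous_const.mul continuous_id))).continuousOn
    · intro x _
      exact (hw' x).differentiableAt.differentiableWithinAt
    · intro x hx
      rw [interior_Ici] at hx
      rw [(hw' x).deriv]
      have h4 := hhigh x (le_of_lt hx)
      have h5 : k*(vp - V x) - deriv V x ≤ 0 := by
        rw [hk_def]; linarith only [h4, hk_def ▸ h4]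
      exact mul_nonpos_of_nonpos_of_nonneg h5 (Real.exp_nonneg _)
  have hg1 : ∀ ξ : ℝ, ξ ≤ 0 → V ξ - vm ≤ δ/2 * Real.exp (k*ξ) := by
    intro ξ hξ
    have hm := humono (Set.mem_Iic.2 hξ) (Set.mem_Iic.2 le_rfl) hξ
    simp only at hm
    rw [hV0] at hm
    have h5 : ((vm+vp)/2 - vm) = δ/2 := by rw [hδ_def]; ring
    rw [h5] at hm
    have h6 : Real.exp (-k*0) = 1 := by norm_num
    rw [h6, mul_one] at hm
    have h7 := mul_le_mul_of_nonneg_right hm (Real.exp_nonneg (k*ξ))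
    calc V ξ - vm = (V ξ - vm) * Real.exp (-k*ξ) * Real.exp (k*ξ) := by
          rw [mul_assoc, ← Real.exp_add]
          norm_num
      _ ≤ δ/2 * Real.exp (k*ξ) := h7
  have hg2 : ∀ ξ : ℝ, 0 ≤ ξ → vp - V ξ ≤ δ/2 * Real.exp (-(k*ξ)) := by
    intro ξ hξ
    have hm := hwanti (Set.mem_Ici.2 le_rfl) (Set.mem_Ici.2 hξ) hξ
    simp only at hm
    rw [hV0] at hm
    have h5 : (vp - (vm+vp)/2) = δ/2 := by rw [hδ_def]; ring
    rw [h5] at hm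
    have h6 : Real.exp (k*0) = 1 := by norm_num
    rw [h6, mul_one] at hm
    have h7 := mul_le_mul_of_nonneg_right hm (Real.exp_nonneg (-(k*ξ)))
    calc vp - V ξ = (vp - V ξ) * Real.exp (k*ξ) * Real.exp (-(k*ξ)) := by
          rw [mul_assoc, ← Real.exp_add]
          norm_num
      _ ≤ δ/2 * Real.exp (-(k*ξ)) := h7
  -- formulas for higher derivatives
  have hDV : deriv V = fun t => h (V t) / (mu*σ) := funext hODE'
  have hcomp1 : ∀ ξ : ℝ, HasDerivAt (fun t => h (V t) / (mu*σ))
      (h1 (V ξ) * (h (V ξ)/(mu*σ)) / (mu*σ)) ξ := by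
    intro ξ
    have e1 := ((hhd (V ξ) (hVpos ξ)).comp ξ (hV'd ξ)).div_const (mu*σ)
    rw [hODE' ξ] at e1
    exact e1
  have hiter2 : ∀ ξ : ℝ, iteratedDeriv 2 V ξ = h1 (V ξ) * (h (V ξ)/(mu*σ)) / (mu*σ) := by
    intro ξ
    have e0 : iteratedDeriv 2 V = deriv (deriv V) := by
      rw [show (2:ℕ) = 1+1 from rfl, iteratedDeriv_succ, iteratedDeriv_one]
    rw [e0, hDV]
    exact (hcomp1 ξ).deriv
  have hiter2f : iteratedDeriv 2 V = fun ξ => (h1 (V ξ) * h (V ξ)) / (mu*σ)^2 := by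
    funext ξ
    rw [hiter2 ξ]
    rw [mul_div_assoc', div_div, ← sq]
  have hcomp2 : ∀ ξ : ℝ, HasDerivAt (fun t => (h1 (V t) * h (V t)) / (mu*σ)^2)
      ((h2 (V ξ) * h (V ξ) + h1 (V ξ) * h1 (V ξ)) * (h (V ξ)/(mu*σ)) / (mu*σ)^2) ξ := by
    intro ξ
    have e1 := (hh1d (V ξ) (hVpos ξ)).comp ξ (hV'd ξ)
    have e2 := (hhd (V ξ) (hVpos ξ)).comp ξ (hV'd ξ)
    have e3 := (e1.mul e2).div_const ((mu*σ)^2)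
    rw [hODE' ξ] at e3
    refine e3.congr_deriv ?_
    simp only [Function.comp_apply]
    ring
  have hiter3 : ∀ ξ : ℝ, iteratedDeriv 3 V ξ
      = (h2 (V ξ) * h (V ξ) + h1 (V ξ) * h1 (V ξ)) * (h (V ξ)/(mu*σ)) / (mu*σ)^2 := by
    intro ξ
    have e0 : iteratedDeriv 3 V = deriv (iteratedDeriv 2 V) := by
      rw [show (3:ℕ) = 2+1 from rfl, iteratedDeriv_succ]
    rw [e0, hiter2f]
    exact (hcomp2 ξ).deriv
  -- scalar bounds
  have hMle : mu*Real.sqrt a ≤ mu*σ := mul_le_mul_of_nonneg_left hσa hmu.le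
  have hM : 0 < mu*Real.sqrt a := by positivity
  have hquad0 : ∀ ξ : ℝ, 0 ≤ h (V ξ) := by
    intro ξ
    refine le_trans ?_ (hquadlow (V ξ) (hVl ξ).le (hVu ξ).le)
    have g1 := hVl ξ; have g2 := hVu ξ
    exact mul_nonneg (mul_nonneg (by linarith only [hb] : (0:ℝ) ≤ b/2) (by linarith)) (by linarith)
  have hsub1 : ∀ ξ : ℝ, V ξ - vm ≤ δ := by
    intro ξ; rw [hδ_def]; linarith only [hVu ξ]
  have hsub2 : ∀ ξ : ℝ, vp - V ξ ≤ δ := by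
    intro ξ; rw [hδ_def]; linarith only [hVl ξ]
  have hsa2 : δ*δ ≤ (s/a)*(s/a) := mul_le_mul hδs hδs hδ.le (div_nonneg hs.le ha.le)
  have hhb : ∀ ξ : ℝ, h (V ξ) ≤ B/2*δ*δ := by
    intro ξ
    have hq := hquadhigh (V ξ) (hVl ξ).le (hVu ξ).le
    have g1 := hVl ξ; have g2 := hVu ξ
    have t1 : B/2*(V ξ - vm)*(vp - V ξ) ≤ B/2*δ*(vp - V ξ) :=
      mul_le_mul_of_nonneg_right
        (mul_le_mul_of_nonneg_left (hsub1 ξ) (by linarith only [hB])) (by linarith)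
    have t2 : B/2*δ*(vp - V ξ) ≤ B/2*δ*δ :=
      mul_le_mul_of_nonneg_left (hsub2 ξ)
        (mul_nonneg (by linarith only [hB]) hδ.le)
    linarith only [hq, t1, t2]
  have hh1b : ∀ ξ : ℝ, |h1 (V ξ)| ≤ B*δ := by
    intro ξ
    have t0 := hosc (V ξ) (hVl ξ).le (hVu ξ).le
    rw [hh1_def]
    simp only
    rw [show -(s/δ) + γ * (V ξ) ^ (-γ-1) = γ * (V ξ) ^ (-γ-1) - s/δ by ring]
    exact t0
  have hh2b : ∀ ξ : ℝ, |h2 (V ξ)| ≤ B := by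
    intro ξ
    have hp := hψ (V ξ) (le_trans hvm2 (hVl ξ).le) (hVu ξ).le
    rw [hh2_def]
    simp only
    rw [abs_of_nonpos (mul_nonpos_of_nonpos_of_nonneg
      (neg_nonpos.2 (mul_nonneg hγ0.le (by linarith only [hγ0]))) (Real.rpow_nonneg (hVpos ξ).le _))]
    simp only [neg_mul, neg_neg]
    linarith only [hp.2]
  have hdbound : ∀ ξ : ℝ, deriv V ξ ≤ (B/2*(V ξ - vm)*(vp - V ξ))/(mu*Real.sqrt a) := by
    intro ξ
    rw [hODE' ξ]
    have g1 := hVl ξ; have g2 := hVu ξ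
    exact div_le_div₀
      (mul_nonneg (mul_nonneg (by linarith only [hB] : (0:ℝ) ≤ B/2) (by linarith)) (by linarith))
      (hquadhigh (V ξ) (hVl ξ).le (hVu ξ).le) hM hMle
  -- conclusions
  intro ξ
  have g1 := hVl ξ
  have g2 := hVu ξ
  have hexpL : ξ ≤ 0 → Real.exp (-(k*|ξ|)) = Real.exp (k*ξ) := by
    intro hξ
    rw [abs_of_nonpos hξ]
    congr 1
    ring
  have hexpR : 0 ≤ ξ → Real.exp (-(k*|ξ|)) = Real.exp (-(k*ξ)) := by
    intro hξ
    rw [abs_of_nonneg hξ]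
  have hδC : δ/2 ≤ C*s := by
    have t1 : δ/2 ≤ s/(2*a) := by
      rw [div_le_div_iff₀ (by norm_num) (by positivity)]
      linarith only [haδ]
    have t2 : s/(2*a) = C1*s := by rw [hC1_def]; ring
    have t3 : C1*s ≤ C*s := mul_le_mul_of_nonneg_right hC1C hs.le
    linarith only [t1, t2, t3]
  refine ⟨?_, ?_, ?_, ?_, ?_⟩
  · intro hξ
    rw [abs_of_pos (by linarith only [g1] : (0:ℝ) < V ξ - vm), hexpL hξ]
    calc V ξ - vm ≤ δ/2 * Real.exp (k*ξ) := hg1 ξ hξ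
      _ ≤ C*s*Real.exp (k*ξ) := mul_le_mul_of_nonneg_right hδC (Real.exp_nonneg _)
  · intro hξ
    rw [abs_of_neg (by linarith only [g2] : V ξ - vp < 0), hexpR hξ]
    calc -(V ξ - vp) = vp - V ξ := by ring
      _ ≤ δ/2 * Real.exp (-(k*ξ)) := hg2 ξ hξ
      _ ≤ C*s*Real.exp (-(k*ξ)) := mul_le_mul_of_nonneg_right hδC (Real.exp_nonneg _)
  · rw [abs_of_nonneg (hdnn ξ)]
    have harith : ∀ E : ℝ, 0 ≤ E →
        (B/2*(δ/2*E)*δ)/(mu*Real.sqrt a) ≤ C*s^2*E := by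
      intro E hE
      have t4 : (B/2*(δ/2*E)*δ)/(mu*Real.sqrt a)
          = (B/(4*(mu*Real.sqrt a))*(δ*δ))*E := by
        field_simp
        ring
      have t5 : B/(4*(mu*Real.sqrt a))*(δ*δ) ≤ B/(4*(mu*Real.sqrt a))*((s/a)*(s/a)) :=
        mul_le_mul_of_nonneg_left hsa2 (by positivity)
      have t6 : B/(4*(mu*Real.sqrt a))*((s/a)*(s/a)) = C2*s^2 := by
        rw [hC2_def]; field_simp
      have t7 : C2*s^2 ≤ C*s^2 := mul_le_mul_of_nonneg_right hC2C (sq_nonneg s)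
      rw [t4]
      calc (B/(4*(mu*Real.sqrt a))*(δ*δ))*E ≤ (C2*s^2)*E :=
            mul_le_mul_of_nonneg_right (by linarith only [t5, t6]) hE
        _ ≤ C*s^2*E := mul_le_mul_of_nonneg_right t7 hE
    rcases le_total ξ 0 with hξ | hξ
    · rw [hexpL hξ]
      have e0 := hdbound ξ
      have e1 : B/2*(V ξ - vm)*(vp - V ξ) ≤ B/2*(δ/2*Real.exp (k*ξ))*δ := by
        have u1 : B/2*(V ξ - vm)*(vp - V ξ) ≤ B/2*(δ/2*Real.exp (k*ξ))*(vp - V ξ) :=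
          mul_le_mul_of_nonneg_right
            (mul_le_mul_of_nonneg_left (hg1 ξ hξ) (by linarith only [hB])) (by linarith only [g2])
        have u2 : B/2*(δ/2*Real.exp (k*ξ))*(vp - V ξ) ≤ B/2*(δ/2*Real.exp (k*ξ))*δ :=
          mul_le_mul_of_nonneg_left (hsub2 ξ)
            (mul_nonneg (by linarith only [hB])
              (mul_nonneg (by linarith only [hδ]) (Real.exp_nonneg _)))
        linarith only [u1, u2]
      have e2 : deriv V ξ ≤ (B/2*(δ/2*Real.exp (k*ξ))*δ)/(mu*Real.sqrt a) :=
        le_trans e0 ((div_le_div_iff_of_pos_right hM).2 e1)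
      exact le_trans e2 (harith _ (Real.exp_nonneg _))
    · rw [hexpR hξ]
      have e0 := hdbound ξ
      have e1 : B/2*(V ξ - vm)*(vp - V ξ) ≤ B/2*(δ/2*Real.exp (-(k*ξ)))*δ := by
        have u1 : B/2*(V ξ - vm)*(vp - V ξ) ≤ B/2*(V ξ - vm)*(δ/2*Real.exp (-(k*ξ))) :=
          mul_le_mul_of_nonneg_left (hg2 ξ hξ)
            (mul_nonneg (by linarith only [hB]) (by linarith only [g1]))
        have u2 : B/2*(V ξ - vm)*(δ/2*Real.exp (-(k*ξ)))
            = B/2*(δ/2*Real.exp (-(k*ξ)))*(V ξ - vm) := by ring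
        have u3 : B/2*(δ/2*Real.exp (-(k*ξ)))*(V ξ - vm) ≤ B/2*(δ/2*Real.exp (-(k*ξ)))*δ :=
          mul_le_mul_of_nonneg_left (hsub1 ξ)
            (mul_nonneg (by linarith only [hB])
              (mul_nonneg (by linarith only [hδ]) (Real.exp_nonneg _)))
        linarith only [u1, u2, u3]
      have e2 : deriv V ξ ≤ (B/2*(δ/2*Real.exp (-(k*ξ)))*δ)/(mu*Real.sqrt a) :=
        le_trans e0 ((div_le_div_iff_of_pos_right hM).2 e1)
      exact le_trans e2 (harith _ (Real.exp_nonneg _))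
  · -- second derivative
    have hform : iteratedDeriv 2 V ξ = (h1 (V ξ)/(mu*σ)) * deriv V ξ := by
      rw [hiter2 ξ, hODE' ξ]
      ring
    rw [hform, abs_mul]
    refine mul_le_mul_of_nonneg_right ?_ (abs_nonneg _)
    rw [abs_div, abs_of_pos hmuσ]
    have t2 : |h1 (V ξ)|/(mu*σ) ≤ (B*δ)/(mu*Real.sqrt a) :=
      div_le_div₀ (mul_nonneg hB.le hδ.le) (hh1b ξ) hM hMle
    have t3 : (B*δ)/(mu*Real.sqrt a) ≤ (B*(s/a))/(mu*Real.sqrt a) :=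
      (div_le_div_iff_of_pos_right hM).2 (mul_le_mul_of_nonneg_left hδs hB.le)
    have t4 : (B*(s/a))/(mu*Real.sqrt a) = C3*s := by
      rw [hC3_def]; field_simp
    have t5 : C3*s ≤ C*s := mul_le_mul_of_nonneg_right hC3C hs.le
    linarith only [t2, t3, t4, t5]
  · -- third derivative
    have hform : iteratedDeriv 3 V ξ
        = ((h2 (V ξ)*h (V ξ) + h1 (V ξ)*h1 (V ξ))/(mu*σ)^2) * deriv V ξ := by
      rw [hiter3 ξ, hODE' ξ]
      ring
    rw [hform, abs_mul]
    refine mul_le_mul_of_nonneg_right ?_ (abs_nonneg _)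
    rw [abs_div, abs_of_pos (pow_pos hmuσ 2)]
    have v1 : |h (V ξ)| ≤ B/2*(s/a)*(s/a) := by
      rw [abs_of_nonneg (hquad0 ξ)]
      have t0 := hhb ξ
      have w1 : B/2*δ*δ ≤ B/2*(s/a)*(s/a) := by
        calc B/2*δ*δ = B/2*(δ*δ) := by ring
          _ ≤ B/2*((s/a)*(s/a)) := mul_le_mul_of_nonneg_left hsa2 (by linarith only [hB])
          _ = B/2*(s/a)*(s/a) := by ring
      linarith only [t0, w1]
    have v2 : |h1 (V ξ)| ≤ B*(s/a) :=
      le_trans (hh1b ξ) (mul_le_mul_of_nonneg_left hδs hB.le)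
    have n1 : |h2 (V ξ)*h (V ξ) + h1 (V ξ)*h1 (V ξ)|
        ≤ B*(B/2*(s/a)*(s/a)) + (B*(s/a))*(B*(s/a)) := by
      have u1 : |h2 (V ξ)*h (V ξ)| ≤ B*(B/2*(s/a)*(s/a)) := by
        rw [abs_mul]
        exact mul_le_mul (hh2b ξ) v1 (abs_nonneg _) hB.le
      have u2 : |h1 (V ξ)*h1 (V ξ)| ≤ (B*(s/a))*(B*(s/a)) := by
        rw [abs_mul]
        exact mul_le_mul v2 v2 (abs_nonneg _) (mul_nonneg hB.le (div_nonneg hs.le ha.le))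
      calc |h2 (V ξ)*h (V ξ) + h1 (V ξ)*h1 (V ξ)|
          ≤ |h2 (V ξ)*h (V ξ)| + |h1 (V ξ)*h1 (V ξ)| := abs_add_le _ _
        _ ≤ B*(B/2*(s/a)*(s/a)) + (B*(s/a))*(B*(s/a)) := add_le_add u1 u2
    have n2 : (mu*Real.sqrt a)^2 ≤ (mu*σ)^2 := by
      apply pow_le_pow_left₀ hM.le hMle
    have n3 : |h2 (V ξ)*h (V ξ) + h1 (V ξ)*h1 (V ξ)|/(mu*σ)^2
        ≤ (B*(B/2*(s/a)*(s/a)) + (B*(s/a))*(B*(s/a)))/((mu*Real.sqrt a)^2) := by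
      apply div_le_div₀ ?_ n1 (by positivity) n2
      have w2 : (0:ℝ) ≤ B*(s/a) := mul_nonneg hB.le (div_nonneg hs.le ha.le)
      have w3 : (0:ℝ) ≤ B/2*(s/a)*(s/a) :=
        mul_nonneg (mul_nonneg (by linarith only [hB]) (div_nonneg hs.le ha.le))
          (div_nonneg hs.le ha.le)
      have w4 : (0:ℝ) ≤ B*(B/2*(s/a)*(s/a)) := mul_nonneg hB.le w3
      exact add_nonneg w4 (mul_nonneg w2 w2)
    have n4 : (B*(B/2*(s/a)*(s/a)) + (B*(s/a))*(B*(s/a)))/((mu*Real.sqrt a)^2) = C5*s^2 := by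
      rw [hC5_def, mul_pow, Real.sq_sqrt ha.le]
      field_simp
      ring
    have n5 : C5*s^2 ≤ C*s^2 := mul_le_mul_of_nonneg_right hC5C (sq_nonneg s)
    linarith only [n3, n4, n5]
end

section
/- Let λ < σ be real numbers, let c > 0, and let δ_R, δ_S ∈ (0,1]. Let X : [0,∞) → ℝ satisfy |X(t)| ≤ ((σ − λ)/4)·t for all t ≥ 0. Suppose a, b : [0,∞) × ℝ → ℝ are measurable and satisfy, for every t ≥ 0: (i) ∫_ℝ a(t,x)² dx ≤ δ_R²; (ii) |a(t,x)| ≤ δ_R e^{−2(x − λ(1+t))} for all x ≥ λ(1+t); (iii) |b(t,x)| ≤ δ_S e^{−c δ_S |x − σ t − X(t)|} for all x ∈ ℝ. Then there exist constants C > 0 and c' > 0, depending only on λ, σ and c, such that for all t ≥ 0: ∫_ℝ a(t,x)² b(t,x)² dx ≤ C δ_R² δ_S² e^{−c' δ_S t}. -/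
open MeasureTheory

lemma aux_exp_int_stmt19 (m E : ℝ) {p : ℝ} (hp : 0 < p) :
    ∫ x in Set.Ioi m, Real.exp (-(p * (x - E))) = Real.exp (-(p * (m - E))) / p := by
  have h1 : ∀ x : ℝ, Real.exp (-(p * (x - E))) = Real.exp (p * E) * Real.exp (-(p * x)) := by
    intro x
    rw [← Real.exp_add]
    congr 1
    ring
  simp_rw [h1]
  rw [integral_const_mul]
  have h2 : (∫ x in Set.Ioi m, Real.exp (-(p * x))) = p⁻¹ * Real.exp (-(p * m)) := by
    have h3 := integral_comp_mul_left_Ioi (fun y => Real.exp (-y)) m hp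
    simp only [smul_eq_mul] at h3
    rw [h3, integral_exp_neg_Ioi]
  rw [h2, ← mul_assoc, mul_comm (Real.exp (p * E)) p⁻¹, mul_assoc, ← Real.exp_add]
  rw [show p * E + -(p * m) = -(p * (m - E)) by ring]
  rw [inv_mul_eq_div]

set_option maxHeartbeats 1000000 in
/-- Abstract wave interaction estimate between a rarefaction-type profile `a`
(L² norm `≤ δ_R`, decaying like `e^(-2(x - λ(1+t)))` to the right of the fan) and
a shifted viscous-shock-type profile `b` (bounded by `δ_S e^(-c δ_S |x - σt - X(t)|)`),
with shift `|X(t)| ≤ ((σ-λ)/4) t`: there are `C, c' > 0` depending only on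
`λ, σ, c` with `∫ a(t)² b(t)² ≤ C δ_R² δ_S² e^(-c' δ_S t)` for all `t ≥ 0`. -/
theorem stmt_19 (lam σ c : ℝ) (hls : lam < σ) (hc : 0 < c) :
    ∃ C > (0 : ℝ), ∃ c' > (0 : ℝ),
      ∀ δR δS : ℝ, 0 < δR → δR ≤ 1 → 0 < δS → δS ≤ 1 →
      ∀ X : ℝ → ℝ, (∀ t : ℝ, 0 ≤ t → |X t| ≤ (σ - lam) / 4 * t) →
      ∀ a b : ℝ → ℝ → ℝ,
        Measurable (Function.uncurry a) → Measurable (Function.uncurry b) →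
        (∀ t : ℝ, 0 ≤ t → Integrable (fun x => (a t x) ^ 2)) →
        (∀ t : ℝ, 0 ≤ t → (∫ x : ℝ, (a t x) ^ 2) ≤ δR ^ 2) →
        (∀ t : ℝ, 0 ≤ t → ∀ x : ℝ, lam * (1 + t) ≤ x →
          |a t x| ≤ δR * Real.exp (-2 * (x - lam * (1 + t)))) →
        (∀ t : ℝ, 0 ≤ t → ∀ x : ℝ,
          |b t x| ≤ δS * Real.exp (-(c * δS * |x - σ * t - X t|))) →
        ∀ t : ℝ, 0 ≤ t →
          (∫ x : ℝ, (a t x) ^ 2 * (b t x) ^ 2)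
            ≤ C * δR ^ 2 * δS ^ 2 * Real.exp (-(c' * δS * t)) := by
  obtain ⟨d, hd_def⟩ : ∃ d : ℝ, d = (σ - lam) / 4 := ⟨_, rfl⟩
  have hd : 0 < d := by rw [hd_def]; linarith
  refine ⟨Real.exp (2 * c * |lam|) + 1, by positivity, min (3 * c * d) (6 * d),
    lt_min (by positivity) (by positivity), ?_⟩
  intro δR δS hδR hδR1 hδS hδS1 X hX a b ham hbm haint haL2 haexp hbexp t ht
  obtain ⟨m, hm_def⟩ : ∃ m : ℝ, m = lam * (1 + t) + 3 * d / 2 * t := ⟨_, rfl⟩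
  obtain ⟨c', hc'_def⟩ : ∃ c' : ℝ, c' = min (3 * c * d) (6 * d) := ⟨_, rfl⟩
  rw [← hc'_def]
  have hcdS : (0 : ℝ) < c * δS := by positivity
  have haM : Measurable (fun x => a t x) := ham.of_uncurry_left
  have hbM : Measurable (fun x => b t x) := hbm.of_uncurry_left
  have hgM : Measurable (fun x => a t x ^ 2 * b t x ^ 2) :=
    (haM.pow_const 2).mul (hbM.pow_const 2)
  -- pointwise bound b² ≤ δS²
  have hb2 : ∀ x : ℝ, b t x ^ 2 ≤ δS ^ 2 := by
    intro x
    have h1 := hbexp t ht x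
    have hE1 : Real.exp (-(c * δS * |x - σ * t - X t|)) ≤ 1 :=
      Real.exp_le_one_iff.mpr (neg_nonpos.mpr (by positivity))
    have h2 : |b t x| ≤ δS := h1.trans (by nlinarith)
    calc b t x ^ 2 = |b t x| ^ 2 := (sq_abs _).symm
      _ ≤ δS ^ 2 := by nlinarith [abs_nonneg (b t x)]
  -- integrability of the product
  have hgint : Integrable (fun x => a t x ^ 2 * b t x ^ 2) := by
    refine Integrable.mono' ((haint t ht).const_mul (δS ^ 2)) hgM.aestronglyMeasurable ?_
    filter_upwards with x
    have h1 := hb2 x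
    have h2 : (0 : ℝ) ≤ a t x ^ 2 := sq_nonneg _
    have h3 : (0 : ℝ) ≤ b t x ^ 2 := sq_nonneg _
    rw [Real.norm_eq_abs, abs_of_nonneg (by positivity)]
    nlinarith
  -- split the integral
  have hsplit : (∫ x : ℝ, a t x ^ 2 * b t x ^ 2)
      = (∫ x in Set.Iic m, a t x ^ 2 * b t x ^ 2)
        + ∫ x in Set.Ioi m, a t x ^ 2 * b t x ^ 2 := by
    rw [← integral_add_compl (measurableSet_Iic (a := m)) hgint, Set.compl_Iic]
  -- bound on Iic m
  have hIic : (∫ x in Set.Iic m, a t x ^ 2 * b t x ^ 2)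
      ≤ δS ^ 2 * Real.exp (-(2 * c * δS * (3 * d / 2 * t - lam))) * δR ^ 2 := by
    have hpt : ∀ x ∈ Set.Iic m, a t x ^ 2 * b t x ^ 2
        ≤ (δS ^ 2 * Real.exp (-(2 * c * δS * (3 * d / 2 * t - lam)))) * a t x ^ 2 := by
      intro x hx
      have hXt := hX t ht
      have hXt1 : -(d * t) ≤ X t := by
        have h0 := (abs_le.mp hXt).1
        rw [hd_def]
        linarith
      have hxm : x ≤ m := hx
      rw [hm_def] at hxm
      have habs : 3 * d / 2 * t - lam ≤ |x - σ * t - X t| := by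
        have h1 : -(x - σ * t - X t) ≤ |x - σ * t - X t| := neg_le_abs _
        have hσt : σ * t = lam * t + 4 * (d * t) := by rw [hd_def]; ring
        nlinarith
      have hbb : b t x ^ 2 ≤ δS ^ 2 * Real.exp (-(2 * c * δS * (3 * d / 2 * t - lam))) := by
        have h1 := hbexp t ht x
        have h2 : Real.exp (-(c * δS * |x - σ * t - X t|))
            ≤ Real.exp (-(c * δS * (3 * d / 2 * t - lam))) :=
          Real.exp_le_exp.mpr (by nlinarith)
        have h3 : |b t x| ≤ δS * Real.exp (-(c * δS * (3 * d / 2 * t - lam))) :=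
          h1.trans (by nlinarith [Real.exp_pos (-(c * δS * |x - σ * t - X t|))])
        calc b t x ^ 2 = |b t x| ^ 2 := (sq_abs _).symm
          _ ≤ (δS * Real.exp (-(c * δS * (3 * d / 2 * t - lam)))) ^ 2 :=
              pow_le_pow_left₀ (abs_nonneg _) h3 2
          _ = δS ^ 2 * Real.exp (-(2 * c * δS * (3 * d / 2 * t - lam))) := by
              rw [mul_pow, pow_two (Real.exp _), ← Real.exp_add]
              rw [show -(c * δS * (3 * d / 2 * t - lam)) + -(c * δS * (3 * d / 2 * t - lam))
                  = -(2 * c * δS * (3 * d / 2 * t - lam)) by ring]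
      have hmm := mul_le_mul_of_nonneg_left hbb (sq_nonneg (a t x))
      nlinarith [hmm]
    calc (∫ x in Set.Iic m, a t x ^ 2 * b t x ^ 2)
        ≤ ∫ x in Set.Iic m,
            (δS ^ 2 * Real.exp (-(2 * c * δS * (3 * d / 2 * t - lam)))) * a t x ^ 2 :=
          setIntegral_mono_on hgint.integrableOn ((haint t ht).const_mul _).integrableOn
            measurableSet_Iic hpt
      _ = (δS ^ 2 * Real.exp (-(2 * c * δS * (3 * d / 2 * t - lam))))
            * ∫ x in Set.Iic m, a t x ^ 2 := integral_const_mul _ _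
      _ ≤ (δS ^ 2 * Real.exp (-(2 * c * δS * (3 * d / 2 * t - lam)))) * δR ^ 2 := by
          have hle : (∫ x in Set.Iic m, a t x ^ 2) ≤ δR ^ 2 :=
            (setIntegral_le_integral (haint t ht)
              (Filter.Eventually.of_forall fun x => sq_nonneg _)).trans (haL2 t ht)
          have hpos : (0 : ℝ) ≤ δS ^ 2 * Real.exp (-(2 * c * δS * (3 * d / 2 * t - lam))) := by
            positivity
          nlinarith
  -- bound on Ioi m
  have hIoi : (∫ x in Set.Ioi m, a t x ^ 2 * b t x ^ 2)
      ≤ δS ^ 2 * δR ^ 2 * (Real.exp (-(4 * (m - lam * (1 + t)))) / 4) := by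
    have hfun : (fun x : ℝ => δS ^ 2 * δR ^ 2 * Real.exp (-(4 * (x - lam * (1 + t)))))
        = fun x : ℝ => (δS ^ 2 * δR ^ 2 * Real.exp (4 * (lam * (1 + t)))) * Real.exp (-4 * x) := by
      funext x
      rw [show -(4 * (x - lam * (1 + t))) = 4 * (lam * (1 + t)) + -4 * x by ring, Real.exp_add]
      ring
    have hint2 : IntegrableOn
        (fun x : ℝ => δS ^ 2 * δR ^ 2 * Real.exp (-(4 * (x - lam * (1 + t))))) (Set.Ioi m) := by
      rw [hfun]
      exact (exp_neg_integrableOn_Ioi m (by norm_num : (0:ℝ) < 4)).const_mul _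
    have hpt : ∀ x ∈ Set.Ioi m, a t x ^ 2 * b t x ^ 2
        ≤ δS ^ 2 * δR ^ 2 * Real.exp (-(4 * (x - lam * (1 + t)))) := by
      intro x hx
      have hxm : m < x := hx
      rw [hm_def] at hxm
      have hxE : lam * (1 + t) ≤ x := by linarith [mul_nonneg hd.le ht]
      have ha := haexp t ht x hxE
      have ha2 : a t x ^ 2 ≤ δR ^ 2 * Real.exp (-(4 * (x - lam * (1 + t)))) := by
        calc a t x ^ 2 = |a t x| ^ 2 := (sq_abs _).symm
          _ ≤ (δR * Real.exp (-2 * (x - lam * (1 + t)))) ^ 2 :=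
              pow_le_pow_left₀ (abs_nonneg _) ha 2
          _ = δR ^ 2 * Real.exp (-(4 * (x - lam * (1 + t)))) := by
              rw [mul_pow, pow_two (Real.exp _), ← Real.exp_add]
              rw [show -2 * (x - lam * (1 + t)) + -2 * (x - lam * (1 + t))
                  = -(4 * (x - lam * (1 + t))) by ring]
      have hb2x := hb2 x
      have hmm := mul_le_mul ha2 hb2x (sq_nonneg (b t x))
        (by positivity : (0:ℝ) ≤ δR ^ 2 * Real.exp (-(4 * (x - lam * (1 + t)))))
      nlinarith [hmm]
    calc (∫ x in Set.Ioi m, a t x ^ 2 * b t x ^ 2)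
        ≤ ∫ x in Set.Ioi m, δS ^ 2 * δR ^ 2 * Real.exp (-(4 * (x - lam * (1 + t)))) :=
          setIntegral_mono_on hgint.integrableOn hint2 measurableSet_Ioi hpt
      _ = δS ^ 2 * δR ^ 2 * ∫ x in Set.Ioi m, Real.exp (-(4 * (x - lam * (1 + t)))) :=
          integral_const_mul _ _
      _ = δS ^ 2 * δR ^ 2 * (Real.exp (-(4 * (m - lam * (1 + t)))) / 4) := by
          rw [aux_exp_int_stmt19 m (lam * (1 + t)) (by norm_num : (0:ℝ) < 4)]
  -- combine
  have hc'3 : c' ≤ 3 * c * d := hc'_def ▸ min_le_left _ _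
  have hc'6 : c' ≤ 6 * d := hc'_def ▸ min_le_right _ _
  have e1 : Real.exp (-(2 * c * δS * (3 * d / 2 * t - lam)))
      ≤ Real.exp (2 * c * |lam|) * Real.exp (-(c' * δS * t)) := by
    rw [← Real.exp_add]
    apply Real.exp_le_exp.mpr
    have h2 : δS * lam ≤ |lam| := by
      calc δS * lam ≤ |δS * lam| := le_abs_self _
        _ = δS * |lam| := by rw [abs_mul, abs_of_pos hδS]
        _ ≤ 1 * |lam| := by nlinarith [abs_nonneg lam]
        _ = |lam| := one_mul _
    nlinarith [mul_nonneg (sub_nonneg.mpr hc'3) (mul_nonneg hδS.le ht),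
      mul_le_mul_of_nonneg_left h2 (by positivity : (0:ℝ) ≤ 2 * c)]
  have e2 : Real.exp (-(4 * (m - lam * (1 + t)))) / 4 ≤ Real.exp (-(c' * δS * t)) := by
    have h1 : Real.exp (-(4 * (m - lam * (1 + t)))) ≤ Real.exp (-(c' * δS * t)) := by
      apply Real.exp_le_exp.mpr
      rw [show m - lam * (1 + t) = 3 * d / 2 * t by rw [hm_def]; ring]
      nlinarith [mul_nonneg (sub_nonneg.mpr hc'6) (mul_nonneg hδS.le ht),
        mul_nonneg (mul_nonneg hd.le hδS.le) ht, mul_nonneg hd.le ht,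
        mul_le_mul_of_nonneg_left hδS1 (mul_nonneg (by linarith : (0:ℝ) ≤ 6 * d) ht)]
    linarith [Real.exp_pos (-(4 * (m - lam * (1 + t))))]
  rw [hsplit]
  have k : (0 : ℝ) ≤ δS ^ 2 * δR ^ 2 := by positivity
  have f1 := mul_le_mul_of_nonneg_left e1 k
  have f2 := mul_le_mul_of_nonneg_left e2 k
  nlinarith [hIic, hIoi, f1, f2, Real.exp_pos (-(c' * δS * t)), sq_nonneg δR, sq_nonneg δS]
end
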